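/- Let N ≥ 1, n ≥ 1 and let f: {0,1}^n → {0,1} be almost balanced. Then for every allowed input string (u,v), the biased system P⁰ boosts the probability that f evaluates to 0 by at least (2/(3n))·sin²(π/(4N)): Σ_{x: f(x)=0} Σ_{y∈{0,1}^n} P⁰(x,y|u,v) ≥ Σ_{x: f(x)=0} Σ_{y∈{0,1}^n} P(x,y|u,v) + (2/(3n))·sin²(π/(4N)). -/

import Mathlib

/-!
Summed over `y`, every unbiased box contributes a factor `1/2`, while the biased pivotal box
contributes `1/2 ± sin²(π/(4N))`, with `+` exactly when `x` agrees with `σ(x)` at its pivot.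
So the boost is `sin²(π/(4N)) · 2^(1-n)` times the signed count `∑_{f(x)=0} ±1`.

The pivot `i(x)` and `σ(x)` depend only on `x_1…x_{i(x)-1}`. Hence, for each `i`, the indicator
of `f = 0` may be replaced by `π⁰(x_1…x_i)`, and pairing `x` with its flip at `i` turns the
contribution of `x` into `Δ_{i(x)}/2 ≥ 1/(3n)`. A pivot exists because `π⁰` moves from
`Pr[f = 0] ∈ [1/3, 2/3]` to `[f(x) = 0] ∈ {0, 1}` in `n` steps of size `Δ_i/2`.
-/

open Finset

/-- `sin²(π/(4N))`. -/
noncomputable def s2 (N : ℕ) : ℝ := Real.sin (Real.pi / (4 * N)) ^ 2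

/-- `cos²(π/(4N))`. -/
noncomputable def c2 (N : ℕ) : ℝ := Real.cos (Real.pi / (4 * N)) ^ 2

/-- The set `G_N` of allowed input pairs: `u ∈ U = {0,2,...,2N-2}`,
`v ∈ V = {1,3,...,2N-1}`, and either `|u-v| = 1` or `(u,v) = (0,2N-1)`. -/
def Allowed (N u v : ℕ) : Prop :=
  Even u ∧ u < 2 * N ∧ Odd v ∧ v < 2 * N ∧
    (v = u + 1 ∨ u = v + 1 ∨ (u = 0 ∧ v = 2 * N - 1))

/-- The single quantum box `Q(x,y|u,v)`: on the input pair `(0,2N-1)` it equals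
`sin²(π/(4N))/2` if `x = y` and `cos²(π/(4N))/2` otherwise; on the input pairs
with `|u-v| = 1` it equals `cos²(π/(4N))/2` if `x = y` and `sin²(π/(4N))/2`
otherwise. -/
noncomputable def Qbox (N : ℕ) (x y : Bool) (u v : ℕ) : ℝ :=
  if u = 0 ∧ v = 2 * N - 1 then (if x = y then s2 N / 2 else c2 N / 2)
  else (if x = y then c2 N / 2 else s2 N / 2)

/-- The allowed input pairs `(u,v) ∈ G_N` with `|u-v| = 1`, as a finite set. -/
def adjPairs (N : ℕ) : Finset (ℕ × ℕ) :=
  (Finset.range (2 * N) ×ˢ Finset.range (2 * N)).filter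
    fun p => Even p.1 ∧ Odd p.2 ∧ (p.2 = p.1 + 1 ∨ p.1 = p.2 + 1)

/-- The chained Bell value
`I_N(R) = R(0,0|0,2N-1) + R(1,1|0,2N-1) + Σ_{(u,v)∈G_N, |u-v|=1} (R(0,1|u,v) + R(1,0|u,v))`. -/
noncomputable def IBell (N : ℕ) (R : Bool → Bool → ℕ → ℕ → ℝ) : ℝ :=
  R false false 0 (2 * N - 1) + R true true 0 (2 * N - 1) +
    ∑ p ∈ adjPairs N, (R false true p.1 p.2 + R true false p.1 p.2)

/-- The biased boxes: `Qbias N false = Q⁰` is biased towards `x = 0` and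
`Qbias N true = Q¹` is biased towards `x = 1`, each by shifting probability
`sin²(π/(4N))/2` within every row. -/
noncomputable def Qbias (N : ℕ) (σ : Bool) (x y : Bool) (u v : ℕ) : ℝ :=
  if x = σ then Qbox N x y u v + s2 N / 2 else Qbox N x y u v - s2 N / 2


/-- `π⁰(s)` for the prefix `s = x_1…x_k`: the fraction, among strings
`z ∈ {0,1}^n` having `x_1…x_k` as a prefix, of those with `f(z) = 0`. -/
noncomputable def piz {n : ℕ} (f : (Fin n → Bool) → Bool) (k : ℕ)
    (x : Fin n → Bool) : ℝ :=
  ((Finset.univ.filter fun z : Fin n → Bool =>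
      (∀ j : Fin n, (j : ℕ) < k → z j = x j) ∧ f z = false).card : ℝ) / 2 ^ (n - k)

/-- `Δ_i(x_1…x_{i-1}) = |π⁰(x_1…x_{i-1}0) - π⁰(x_1…x_{i-1}1)|` (the index `i`
is 0-based here, so the prefix consists of the coordinates `j < i`). -/
noncomputable def Del {n : ℕ} (f : (Fin n → Bool) → Bool) (i : Fin n)
    (x : Fin n → Bool) : ℝ :=
  |piz f ((i : ℕ) + 1) (Function.update x i false) -
    piz f ((i : ℕ) + 1) (Function.update x i true)|

/-- `f` is almost balanced: `|Pr_x[f(x)=0] - Pr_x[f(x)=1]| ≤ 1/3` over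
uniformly random `x ∈ {0,1}^n`. -/
def AlmostBalanced {n : ℕ} (f : (Fin n → Bool) → Bool) : Prop :=
  |((Finset.univ.filter fun x : Fin n → Bool => f x = false).card : ℝ) / 2 ^ n -
    ((Finset.univ.filter fun x : Fin n → Bool => f x = true).card : ℝ) / 2 ^ n| ≤ 1 / 3

open Classical in
/-- The pivotal index `i(x)`: the least `i` with `Δ_i(x_1…x_{i-1}) ≥ 2/(3n)`
(junk value if none exists). -/
noncomputable def pivot {n : ℕ} (hn : 0 < n) (f : (Fin n → Bool) → Bool)
    (x : Fin n → Bool) : Fin n :=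
  (Fin.find? fun i : Fin n => decide (Del f i x ≥ 2 / (3 * n))).getD ⟨0, hn⟩

/-- The bias direction `σ(x)`: `0` if `π⁰(x_1…x_{i(x)-1}0) > π⁰(x_1…x_{i(x)-1}1)`
and `1` otherwise. -/
noncomputable def sig {n : ℕ} (hn : 0 < n) (f : (Fin n → Bool) → Bool)
    (x : Fin n → Bool) : Bool :=
  if piz f ((pivot hn f x : ℕ) + 1) (Function.update x (pivot hn f x) false) >
      piz f ((pivot hn f x : ℕ) + 1) (Function.update x (pivot hn f x) true)
  then false else true


/-- An allowed input string: componentwise allowed input pairs `(u_j, v_j) ∈ G_N`. -/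
def AllowedStr (N : ℕ) {n : ℕ} (u v : Fin n → ℕ) : Prop :=
  ∀ j : Fin n, Allowed N (u j) (v j)

/-- The `n`-fold product quantum system
`P(x,y|u,v) = ∏_j Q(x_j,y_j|u_j,v_j)`. -/
noncomputable def Pprod (N : ℕ) {n : ℕ} (x y : Fin n → Bool) (u v : Fin n → ℕ) : ℝ :=
  ∏ j : Fin n, Qbox N (x j) (y j) (u j) (v j)

/-- The biased `n`-box systems: `Pbias N hn f false = P⁰` biases the pivotal
subsystem of `x` in direction `σ(x)`, and `Pbias N hn f true = P¹` biases it
in direction `1 - σ(x)`; all the non-pivotal subsystems are the unbiased `Q`. -/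
noncomputable def Pbias (N : ℕ) {n : ℕ} (hn : 0 < n) (f : (Fin n → Bool) → Bool)
    (flip : Bool) (x y : Fin n → Bool) (u v : Fin n → ℕ) : ℝ :=
  Qbias N (xor (sig hn f x) flip) (x (pivot hn f x)) (y (pivot hn f x))
      (u (pivot hn f x)) (v (pivot hn f x)) *
    ∏ j ∈ Finset.univ.erase (pivot hn f x), Qbox N (x j) (y j) (u j) (v j)

lemma sum_apply_mul_prod_erase {ι α R : Type*} [Fintype ι] [DecidableEq ι] [Fintype α]
    [CommSemiring R] (g : ι → α → R) (i : ι) (h : α → R) :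
    ∑ y : ι → α, h (y i) * ∏ j ∈ univ.erase i, g j (y j) =
      (∑ a, h a) * ∏ j ∈ univ.erase i, ∑ a, g j a := by
  have key := Fintype.prod_sum (Function.update g i h)
  rw [← mul_prod_erase univ _ (mem_univ i)] at key
  simp only [Function.update_self] at key
  rw [prod_congr rfl fun j hj => by rw [Function.update_of_ne (ne_of_mem_erase hj)]] at key
  rw [key]
  refine sum_congr rfl fun y _ => ?_
  rw [← mul_prod_erase univ _ (mem_univ i), Function.update_self]
  congr 1
  exact prod_congr rfl fun j hj => by rw [Function.update_of_ne (ne_of_mem_erase hj)]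

lemma sum_update_false_add_update_true {ι M : Type*} [Fintype ι] [DecidableEq ι]
    [AddCommMonoid M] (i : ι) (h : (ι → Bool) → M) :
    ∑ x, (h (Function.update x i false) + h (Function.update x i true)) = 2 • ∑ x, h x := by
  let flip : Equiv.Perm (ι → Bool) :=
    Function.Involutive.toPerm (fun x => Function.update x i (!x i)) fun x => by simp
  have hpair (x : ι → Bool) :
      h (Function.update x i false) + h (Function.update x i true) = h x + h (flip x) := by
    have hx := Function.update_eq_self i x
    have hflip : flip x = Function.update x i (!x i) := rfl
    cases hxi : x i <;> rw [hxi] at hx <;> simp [hflip, hxi, hx, add_comm]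
  rw [sum_congr rfl fun x _ => hpair x, sum_add_distrib, Equiv.sum_comp flip h, two_nsmul]

lemma sum_Qbox (N : ℕ) (x : Bool) (u v : ℕ) : ∑ b, Qbox N x b u v = 1 / 2 := by
  have h : s2 N + c2 N = 1 := Real.sin_sq_add_cos_sq _
  rw [Fintype.sum_bool]
  cases x <;> simp only [Qbox, Bool.false_eq_true, Bool.true_eq_false, if_true, if_false] <;>
    split_ifs <;> linarith

lemma sum_Qbias (N : ℕ) (σ x : Bool) (u v : ℕ) :
    ∑ b, Qbias N σ x b u v = 1 / 2 + if x = σ then s2 N else -s2 N := by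
  have h := sum_Qbox N x u v
  rw [Fintype.sum_bool] at h ⊢
  by_cases hx : x = σ
  · subst hx; simp only [Qbias, if_true]; linarith
  · simp only [Qbias, hx, if_false]; linarith

lemma sum_Pprod (N : ℕ) {n : ℕ} (x : Fin n → Bool) (u v : Fin n → ℕ) :
    ∑ y, Pprod N x y u v = (1 / 2) ^ n := by
  simp only [Pprod, ← Fintype.prod_sum fun j b => Qbox N (x j) b (u j) (v j), sum_Qbox,
    prod_const, card_univ, Fintype.card_fin]

noncomputable def pivotSign {n : ℕ} (hn : 0 < n) (f : (Fin n → Bool) → Bool)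
    (x : Fin n → Bool) : ℝ :=
  if x (pivot hn f x) = sig hn f x then 1 else -1

lemma sum_Pbias_false (N : ℕ) {n : ℕ} (hn : 0 < n) (f : (Fin n → Bool) → Bool)
    (x : Fin n → Bool) (u v : Fin n → ℕ) :
    ∑ y, Pbias N hn f false x y u v =
      (1 / 2) ^ n + (1 / 2) ^ (n - 1) * (pivotSign hn f x * s2 N) := by
  set i := pivot hn f x
  have hrows : ∏ j ∈ univ.erase i, ∑ b, Qbox N (x j) b (u j) (v j) = (1 / 2) ^ (n - 1) := by
    rw [prod_congr rfl fun j _ => sum_Qbox N (x j) (u j) (v j), prod_const,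
      card_erase_of_mem (mem_univ i), card_univ, Fintype.card_fin]
  have hpow : ((1 : ℝ) / 2) ^ n = 1 / 2 * (1 / 2) ^ (n - 1) := by
    rw [← pow_succ', Nat.sub_add_cancel hn]
  simp only [Pbias, Bool.xor_false]
  rw [sum_apply_mul_prod_erase (fun j b => Qbox N (x j) b (u j) (v j)) i
    (fun b => Qbias N (sig hn f x) (x i) b (u i) (v i)), sum_Qbias, hrows, hpow, pivotSign]
  split_ifs <;> ring

section Prefix

variable {n : ℕ} (f : (Fin n → Bool) → Bool)

lemma card_agree_below {k : ℕ} (hk : k ≤ n) (x : Fin n → Bool) :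
    #{z : Fin n → Bool | ∀ j : Fin n, (j : ℕ) < k → z j = x j} = 2 ^ (n - k) := by
  have hset : ({z : Fin n → Bool | ∀ j : Fin n, (j : ℕ) < k → z j = x j} : Finset _) =
      Fintype.piFinset fun j : Fin n => if (j : ℕ) < k then {x j} else univ := by
    ext z
    simp only [mem_filter, mem_univ, true_and, Fintype.mem_piFinset]
    refine forall_congr' fun j => ?_
    split_ifs with hj <;> simp [hj]
  have hlow : #{j : Fin n | (j : ℕ) < k} = k := by
    rw [Fin.card_filter_val_lt, min_eq_right hk]
  rw [hset, Fintype.card_piFinset]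
  simp only [apply_ite card, card_singleton, card_univ, Fintype.card_bool]
  rw [prod_ite, prod_const, prod_const, one_pow, one_mul, filter_not, card_sdiff_of_subset (filter_subset _ _), hlow, card_univ, Fintype.card_fin]

lemma piz_eq_sum (k : ℕ) (x : Fin n → Bool) :
    piz f k x = (∑ z, if (∀ j : Fin n, (j : ℕ) < k → z j = x j) ∧ f z = false then 1 else 0) /
      2 ^ (n - k) := by
  rw [piz, sum_boole]

lemma agree_below_update_iff (i : Fin n) (x z : Fin n → Bool) (b : Bool) :
    (∀ j : Fin n, (j : ℕ) < i + 1 → z j = Function.update x i b j) ↔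
      (∀ j : Fin n, (j : ℕ) < i → z j = x j) ∧ z i = b := by
  simp only [Function.update_apply]
  grind

lemma piz_congr (k : ℕ) {x x' : Fin n → Bool} (h : ∀ j : Fin n, (j : ℕ) < k → x j = x' j) :
    piz f k x = piz f k x' := by
  unfold piz
  congr 3
  exact filter_congr fun z _ => and_congr_left' (forall₂_congr fun j hj => by rw [h j hj])

lemma piz_update_congr (i : Fin n) {x x' : Fin n → Bool}
    (h : ∀ j : Fin n, (j : ℕ) < i → x j = x' j) (b : Bool) :
    piz f (i + 1) (Function.update x i b) = piz f (i + 1) (Function.update x' i b) :=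
  piz_congr f _ fun j hj => by simp only [Function.update_apply]; grind

lemma Del_congr (i : Fin n) {x x' : Fin n → Bool} (h : ∀ j : Fin n, (j : ℕ) < i → x j = x' j) :
    Del f i x = Del f i x' := by
  rw [Del, Del, piz_update_congr f i h, piz_update_congr f i h]

lemma piz_split (i : Fin n) (x : Fin n → Bool) :
    piz f i x = (piz f (i + 1) (Function.update x i false) +
      piz f (i + 1) (Function.update x i true)) / 2 := by
  have hpow : (2 : ℝ) ^ (n - i) = 2 * 2 ^ (n - (i + 1)) := by
    rw [← pow_succ']; congr 1; omega
  simp only [piz_eq_sum, agree_below_update_iff, hpow, ← add_div, ← sum_add_distrib]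
  rw [div_div, mul_comm (2 ^ _ : ℝ)]
  congr 1
  refine sum_congr rfl fun z _ => ?_
  cases z i <;> simp

lemma abs_piz_succ_sub (i : Fin n) (x : Fin n → Bool) :
    |piz f (i + 1) x - piz f i x| = Del f i x / 2 := by
  have hx : piz f (i + 1) x = piz f (i + 1) (Function.update x i (x i)) := by
    rw [Function.update_eq_self]
  rw [piz_split f i x, Del, hx]
  cases x i
  · rw [show ∀ a b : ℝ, a - (a + b) / 2 = (a - b) / 2 by intros; ring, abs_div, abs_two]
  · rw [show ∀ a b : ℝ, b - (a + b) / 2 = -((a - b) / 2) by intros; ring, abs_neg, abs_div,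
      abs_two]

lemma piz_full (x : Fin n → Bool) : piz f n x = if f x = false then 1 else 0 := by
  have hagree (z : Fin n → Bool) : (∀ j : Fin n, (j : ℕ) < n → z j = x j) ↔ z = x :=
    ⟨fun h => funext fun j => h j j.isLt, fun h j _ => h ▸ rfl⟩
  have hset : ({z | (∀ j : Fin n, (j : ℕ) < n → z j = x j) ∧ f z = false} : Finset _) =
      if f x = false then {x} else ∅ := by
    ext z
    by_cases hfx : f x = false <;> simp only [hagree] <;> aesop
  rw [piz, hset, Nat.sub_self, pow_zero, div_one]
  split_ifs <;> simp

lemma one_third_le_abs_piz_full_sub_piz_zero (hf : AlmostBalanced f) (x : Fin n → Bool) :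
    1 / 3 ≤ |piz f n x - piz f 0 x| := by
  have hsum : (#{z | f z = false} : ℝ) / 2 ^ n + #{z | f z = true} / 2 ^ n = 1 := by
    have h := card_filter_add_card_filter_not (s := univ) (fun z : Fin n → Bool => f z = false)
    simp only [Bool.not_eq_false, card_univ, Fintype.card_fun, Fintype.card_bool,
      Fintype.card_fin] at h
    rw [← add_div, div_eq_one_iff_eq (by positivity)]
    exact_mod_cast h
  have hzero : piz f 0 x = #{z | f z = false} / 2 ^ n := by simp [piz]
  rw [AlmostBalanced, abs_le] at hf
  rw [piz_full, hzero]
  split_ifs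
  · rw [abs_of_nonneg] <;> linarith
  · rw [abs_of_nonpos] <;> linarith

lemma two_thirds_le_sum_Del (hf : AlmostBalanced f) (x : Fin n → Bool) :
    2 / 3 ≤ ∑ i, Del f i x := by
  have htele : |piz f n x - piz f 0 x| ≤ ∑ i : Fin n, Del f i x / 2 := by
    simp only [← abs_piz_succ_sub]
    rw [← sum_range_sub (fun k => piz f k x),
      Fin.sum_univ_eq_sum_range (fun k => |piz f (k + 1) x - piz f k x|)]
    exact abs_sum_le_sum_abs _ _
  rw [← sum_div] at htele
  linarith [one_third_le_abs_piz_full_sub_piz_zero f hf x]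

lemma exists_Del_ge (hn : 0 < n) (hf : AlmostBalanced f) (x : Fin n → Bool) :
    ∃ i, 2 / (3 * n) ≤ Del f i x := by
  have hconst : ∑ _i : Fin n, (2 / (3 * n) : ℝ) = 2 / 3 := by
    rw [sum_const, card_univ, Fintype.card_fin, nsmul_eq_mul]
    field_simp
  obtain ⟨i, -, hi⟩ := exists_le_of_sum_le (univ_nonempty_iff.mpr ⟨⟨0, hn⟩⟩)
    (hconst.trans_le (two_thirds_le_sum_Del f hf x))
  exact ⟨i, hi⟩

lemma sum_piz_mul {k : ℕ} (hk : k ≤ n) (c : (Fin n → Bool) → ℝ)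
    (hc : ∀ x z, (∀ j : Fin n, (j : ℕ) < k → x j = z j) → c x = c z) :
    ∑ x, piz f k x * c x = ∑ x, if f x = false then c x else 0 := by
  have hclass (z : Fin n → Bool) :
      ∑ x, (if ∀ j : Fin n, (j : ℕ) < k → z j = x j then c x else 0) = 2 ^ (n - k) * c z := by
    rw [← sum_filter,
      sum_congr rfl fun x hx => hc x z fun j hj => ((mem_filter.mp hx).2 j hj).symm,
      sum_const, nsmul_eq_mul]
    simp only [eq_comm (a := z _), card_agree_below hk z, Nat.cast_pow, Nat.cast_ofNat]
  calc ∑ x, piz f k x * c x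
      = ∑ x, ∑ z, (if (∀ j : Fin n, (j : ℕ) < k → z j = x j) ∧ f z = false then c x else 0) /
          2 ^ (n - k) := by
        simp only [piz_eq_sum, div_mul_eq_mul_div, sum_div, sum_mul, ite_mul, one_mul, zero_mul]
    _ = ∑ z, if f z = false then c z else 0 := by
        rw [sum_comm]
        refine sum_congr rfl fun z _ => ?_
        split_ifs with hz
        · simp only [hz, and_true, ← sum_div, hclass]
          field_simp
        · simp [hz]

end Prefix

section Pivot

variable {n : ℕ} (hn : 0 < n) {f : (Fin n → Bool) → Bool}

lemma find?_eq_some_pivot (hf : AlmostBalanced f) (x : Fin n → Bool) :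
    Fin.find? (fun i : Fin n => decide (Del f i x ≥ 2 / (3 * n))) = some (pivot hn f x) := by
  obtain ⟨i, hi⟩ := exists_Del_ge f hn hf x
  obtain ⟨k, hk⟩ := Option.isSome_iff_exists.mp
    ((Fin.isSome_find?_iff (p := fun i : Fin n => decide (Del f i x ≥ 2 / (3 * n)))).mpr
      ⟨i, by simpa using hi⟩)
  rw [pivot, hk]
  rfl

lemma le_Del_pivot (hf : AlmostBalanced f) (x : Fin n → Bool) :
    2 / (3 * n) ≤ Del f (pivot hn f x) x := by
  simpa using (Fin.find?_eq_some_iff.mp (find?_eq_some_pivot hn hf x)).1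

lemma Del_lt_of_lt_pivot (hf : AlmostBalanced f) (x : Fin n → Bool) {j : Fin n}
    (hj : j < pivot hn f x) : Del f j x < 2 / (3 * n) := by
  simpa using (Fin.find?_eq_some_iff.mp (find?_eq_some_pivot hn hf x)).2 j hj

lemma pivot_congr (hf : AlmostBalanced f) {x x' : Fin n → Bool}
    (h : ∀ j : Fin n, (j : ℕ) < pivot hn f x → x' j = x j) : pivot hn f x' = pivot hn f x := by
  by_contra hne
  rcases lt_or_gt_of_ne hne with hlt | hgt
  · have hlt' : (pivot hn f x' : ℕ) < pivot hn f x := hlt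
    have := le_Del_pivot hn hf x'
    rw [Del_congr f _ fun j hj => h j (hj.trans hlt')] at this
    exact (Del_lt_of_lt_pivot hn hf x hlt).not_ge this
  · have := le_Del_pivot hn hf x
    rw [← Del_congr f _ h] at this
    exact (Del_lt_of_lt_pivot hn hf x' hgt).not_ge this

lemma pivot_eq_iff_of_agree (hf : AlmostBalanced f) {i : Fin n} {x x' : Fin n → Bool}
    (h : ∀ j : Fin n, (j : ℕ) < i → x' j = x j) : pivot hn f x' = i ↔ pivot hn f x = i := by
  constructor
  · rintro rfl
    exact pivot_congr hn hf fun j hj => (h j hj).symm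
  · rintro rfl
    exact pivot_congr hn hf h

lemma sig_congr (hf : AlmostBalanced f) {x x' : Fin n → Bool}
    (h : ∀ j : Fin n, (j : ℕ) < pivot hn f x → x' j = x j) : sig hn f x' = sig hn f x := by
  rw [sig, sig, pivot_congr hn hf h, piz_update_congr f _ h, piz_update_congr f _ h]

end Pivot

section Counting

variable {n : ℕ} (hn : 0 < n) {f : (Fin n → Bool) → Bool}

lemma piz_update_mul_sign_add_eq_Del (x : Fin n → Bool) :
    piz f (pivot hn f x + 1) (Function.update x (pivot hn f x) false) *
        (if false = sig hn f x then 1 else -1) +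
      piz f (pivot hn f x + 1) (Function.update x (pivot hn f x) true) *
        (if true = sig hn f x then 1 else -1) = Del f (pivot hn f x) x := by
  rw [Del, sig]
  generalize piz f _ (Function.update x _ false) = A
  generalize piz f _ (Function.update x _ true) = B
  by_cases h : A > B
  · rw [if_pos h, abs_of_pos (sub_pos.mpr h)]
    simp [sub_eq_add_neg]
  · rw [if_neg h, abs_of_nonpos (sub_nonpos.mpr (not_lt.mp h))]
    simp [sub_eq_neg_add]

lemma sum_ite_pivot_Del_eq (hf : AlmostBalanced f) (i : Fin n) :
    ∑ x, (if pivot hn f x = i then Del f i x else 0) =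
      2 * ∑ x, piz f (i + 1) x * (if pivot hn f x = i then pivotSign hn f x else 0) := by
  rw [two_mul, ← two_nsmul, ← sum_update_false_add_update_true i]
  refine sum_congr rfl fun x _ => ?_
  have hagree (b : Bool) : ∀ j : Fin n, (j : ℕ) < i → Function.update x i b j = x j :=
    fun j hj => Function.update_of_ne (Fin.ne_of_lt hj) b x
  simp only [pivot_eq_iff_of_agree hn hf (hagree _)]
  split_ifs with hx
  · subst hx
    have hsign (b : Bool) : pivotSign hn f (Function.update x (pivot hn f x) b) =
        if b = sig hn f x then 1 else -1 := by
      rw [pivotSign, pivot_congr hn hf (hagree b), Function.update_self,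
        sig_congr hn hf (hagree b)]
    rw [hsign, hsign, piz_update_mul_sign_add_eq_Del]
  · simp

lemma ite_pivot_eq_pivotSign_congr (hf : AlmostBalanced f) (i : Fin n) (x z : Fin n → Bool)
    (h : ∀ j : Fin n, (j : ℕ) < i + 1 → x j = z j) :
    (if pivot hn f x = i then pivotSign hn f x else 0) =
      if pivot hn f z = i then pivotSign hn f z else 0 := by
  have hbelow (j : Fin n) (hj : (j : ℕ) < i) : z j = x j := (h j (by omega)).symm
  simp only [pivot_eq_iff_of_agree hn hf hbelow]
  split_ifs with hx
  · subst hx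
    rw [pivotSign, pivotSign, pivot_congr hn hf hbelow, sig_congr hn hf hbelow,
      h _ (Nat.lt_succ_self _)]
  · rfl

lemma pow_div_le_sum_pivotSign (hf : AlmostBalanced f) :
    (2 : ℝ) ^ n / (3 * n) ≤ ∑ x ∈ {x | f x = false}, pivotSign hn f x := by
  calc (2 : ℝ) ^ n / (3 * n) = ∑ _x : Fin n → Bool, (2 / (3 * n) / 2 : ℝ) := by
        rw [sum_const, card_univ, Fintype.card_fun, Fintype.card_bool, Fintype.card_fin,
          nsmul_eq_mul]
        push_cast
        ring
    _ ≤ ∑ x, Del f (pivot hn f x) x / 2 :=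
        sum_le_sum fun x _ => div_le_div_of_nonneg_right (le_Del_pivot hn hf x) zero_le_two
    _ = (∑ i, ∑ x, if pivot hn f x = i then Del f i x else 0) / 2 := by
        rw [sum_comm, ← sum_div]
        refine congrArg (· / 2) (sum_congr rfl fun x _ => ?_)
        rw [sum_ite_eq, if_pos (mem_univ _)]
    _ = ∑ i : Fin n, ∑ x, piz f (i + 1) x *
          (if pivot hn f x = i then pivotSign hn f x else 0) := by
        simp only [sum_ite_pivot_Del_eq hn hf, ← mul_sum]
        ring
    _ = ∑ i : Fin n, ∑ x, if f x = false then (if pivot hn f x = i then pivotSign hn f x else 0)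
          else 0 :=
        sum_congr rfl fun i _ =>
          sum_piz_mul f (k := i + 1) i.isLt _ (ite_pivot_eq_pivotSign_congr hn hf i)
    _ = ∑ x ∈ {x | f x = false}, pivotSign hn f x := by
        rw [sum_comm, sum_filter]
        refine sum_congr rfl fun x _ => ?_
        split_ifs <;> simp

end Counting

theorem biased_system_boosts_f_zero_general (N n : ℕ) (hn : 0 < n)
    (f : (Fin n → Bool) → Bool) (hf : AlmostBalanced f) (u v : Fin n → ℕ) :
    ∑ x ∈ Finset.univ.filter (fun x : Fin n → Bool => f x = false),
        ∑ y : Fin n → Bool, Pbias N hn f false x y u v ≥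
      (∑ x ∈ Finset.univ.filter (fun x : Fin n → Bool => f x = false),
        ∑ y : Fin n → Bool, Pprod N x y u v) + (2 / (3 * n)) * s2 N := by
  have hscale : (1 / 2 : ℝ) ^ (n - 1) * (2 ^ n / (3 * n)) = 2 / (3 * n) := by
    rw [← Nat.sub_add_cancel hn, pow_succ, Nat.add_sub_cancel, mul_div_assoc', ← mul_assoc,
      ← mul_pow]
    norm_num
  simp only [sum_Pbias_false, sum_Pprod, sum_add_distrib, ← mul_sum, ← sum_mul]
  rw [ge_iff_le, add_le_add_iff_left, ← hscale, ← mul_assoc]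
  gcongr
  · exact sq_nonneg _
  · exact pow_div_le_sum_pivotSign hn hf

/-- For `N ≥ 1`, `n ≥ 1` and an almost balanced `f`, on every allowed input
string the biased system `P⁰` boosts the probability that `f` evaluates to `0`
by at least `(2/(3n))·sin²(π/(4N))` compared to the product quantum system `P`. -/
theorem biased_system_boosts_f_zero (N n : ℕ) (hN : 1 ≤ N) (hn : 0 < n)
    (f : (Fin n → Bool) → Bool) (hf : AlmostBalanced f) (u v : Fin n → ℕ)
    (huv : AllowedStr N u v) :
    ∑ x ∈ Finset.univ.filter (fun x : Fin n → Bool => f x = false),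
        ∑ y : Fin n → Bool, Pbias N hn f false x y u v ≥
      (∑ x ∈ Finset.univ.filter (fun x : Fin n → Bool => f x = false),
        ∑ y : Fin n → Bool, Pprod N x y u v) + (2 / (3 * n)) * s2 N :=
  biased_system_boosts_f_zero_general N n hn f hf u v
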